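/- arXiv:1309.3866 — 2 statements merged into one kernel-verified Lean document; each statement's English description precedes it below -/
import Mathlib

section
/- If a Banach space X has the almost Daugavet property, then every convex combination of weak-star slices of the closed unit ball of X* has diameter 2. -/
open scoped BigOperators
open Metric

noncomputable section

/-- `X` has the Daugavet property with respect to the subspace `Y` of `X*`:
`‖I + T‖ = 1 + ‖T‖` for every rank-one operator `T = x ⊗ g` with `g ∈ Y`. -/
def DaugavetWrt (X : Type*) [NormedAddCommGroup X] [NormedSpace ℝ X]
    (Y : Subspace ℝ (StrongDual ℝ X)) : Prop :=
  ∀ x : X, ∀ g ∈ Y,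
    ‖ContinuousLinearMap.id ℝ X + g.smulRight x‖ = 1 + ‖g.smulRight x‖

/-- `Y ⊆ X*` is a norming subspace. -/
def IsNorming (X : Type*) [NormedAddCommGroup X] [NormedSpace ℝ X]
    (Y : Subspace ℝ (StrongDual ℝ X)) : Prop :=
  ∀ x : X, ‖x‖ = sSup {r : ℝ | ∃ g ∈ Y, ‖g‖ ≤ 1 ∧ r = |g x|}

/-- `X` has the almost Daugavet property. -/
def AlmostDaugavet (X : Type*) [NormedAddCommGroup X] [NormedSpace ℝ X] : Prop :=
  ∃ Y : Subspace ℝ (StrongDual ℝ X), IsNorming X Y ∧ DaugavetWrt X Y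

/-- The weak-star slice of the dual unit ball determined by `x` and `α`. -/
def wSlice {X : Type*} [NormedAddCommGroup X] [NormedSpace ℝ X] (x : X) (α : ℝ) :
    Set (StrongDual ℝ X) :=
  {f | ‖f‖ ≤ 1 ∧ 1 - α < f x}

/-- The convex combination `∑ lam i • S i` of sets. -/
def ccomb {E : Type*} [AddCommMonoid E] [Module ℝ E] {n : ℕ}
    (lam : Fin n → ℝ) (S : Fin n → Set E) : Set E :=
  {y | ∃ f : Fin n → E, (∀ i, f i ∈ S i) ∧ y = ∑ i, lam i • f i}

/-!
The Daugavet equation for `g ⊗ u` with `g ∈ Y` puts points `z` with `‖u + z‖` close to `2` into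
every slice of `B_X` given by a functional `g ∈ Y`; as `Y` is norming, these points can be cut out
by a smaller slice given by a functional of `Y`. Iterating over the finitely many vectors `± xᵢ`
gives a single `z ∈ B_X` with `‖xᵢ + z‖` and `‖xᵢ - z‖` close to `2` for all `i`. Functionals
`fᵢ`, `kᵢ` of norm at most one nearly norming `xᵢ + z` and `xᵢ - z` then lie in the `i`-th
weak-star slice, and `∑ λᵢ fᵢ - ∑ λᵢ kᵢ` is close to `2` at `z`.
-/

open Filter

section

variable {X : Type*} [NormedAddCommGroup X] [NormedSpace ℝ X]

lemma StrongDual.apply_le_opNorm_of_norm_le_one (f : StrongDual ℝ X) {z : X} (hz : ‖z‖ ≤ 1) :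
    f z ≤ ‖f‖ :=
  (le_abs_self _).trans ((f.le_opNorm_of_le hz).trans_eq (mul_one _))

lemma StrongDual.apply_le_norm_of_opNorm_le_one {f : StrongDual ℝ X} (hf : ‖f‖ ≤ 1) (z : X) :
    f z ≤ ‖z‖ :=
  (le_abs_self _).trans ((f.le_of_opNorm_le hf z).trans_eq (one_mul _))

lemma StrongDual.apply_le_one {f : StrongDual ℝ X} (hf : ‖f‖ ≤ 1) {z : X} (hz : ‖z‖ ≤ 1) :
    f z ≤ 1 :=
  (f.apply_le_norm_of_opNorm_le_one hf z).trans hz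

def ballSlice (g : StrongDual ℝ X) (c : ℝ) : Set X :=
  {z | ‖z‖ ≤ 1 ∧ c < g z}

lemma ballSlice_smul (g : StrongDual ℝ X) (c : ℝ) {t : ℝ} (ht : 0 < t) :
    ballSlice (t • g) (t * c) = ballSlice g c := by
  ext z
  simp [ballSlice, mul_lt_mul_iff_right₀ ht]

lemma ballSlice_nonempty {g : StrongDual ℝ X} (hg : ‖g‖ = 1) {c : ℝ} (hc : c < 1) :
    (ballSlice g c).Nonempty := by
  obtain ⟨z, hz, hcz⟩ := g.exists_lt_apply_of_lt_opNorm (hg ▸ hc)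
  wlog hgz : 0 ≤ g z generalizing z
  · exact this (-z) (by simpa using hz) (by simpa using hcz) (by simp; linarith)
  exact ⟨z, hz.le, by simpa [abs_of_nonneg hgz] using hcz⟩

namespace IsNorming

variable {Y : Subspace ℝ (StrongDual ℝ X)}

lemma exists_norm_sub_lt_apply (hY : IsNorming X Y) (w : X) {δ : ℝ} (hδ : 0 < δ) :
    ∃ h ∈ Y, ‖h‖ ≤ 1 ∧ ‖w‖ - δ < h w := by
  have hne : {r : ℝ | ∃ g ∈ Y, ‖g‖ ≤ 1 ∧ r = |g w|}.Nonempty := ⟨0, 0, Y.zero_mem, by simp⟩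
  obtain ⟨-, ⟨h, hhY, hh, rfl⟩, hlt⟩ := exists_lt_of_lt_csSup hne
    (show ‖w‖ - δ < sSup _ by rw [← hY w]; linarith)
  wlog hhw : 0 ≤ h w generalizing h
  · exact this (-h) (Y.neg_mem hhY) (by simpa using hh) (by simpa using hlt) (by simp; linarith)
  exact ⟨h, hhY, hh, by rwa [abs_of_nonneg hhw] at hlt⟩

lemma exists_norm_eq_one [Nontrivial X] (hY : IsNorming X Y) : ∃ g ∈ Y, ‖g‖ = 1 := by
  obtain ⟨w, hw⟩ := exists_ne (0 : X)
  obtain ⟨h, hhY, -, hhw⟩ := hY.exists_norm_sub_lt_apply w (norm_pos_iff.2 hw)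
  have h0 : h ≠ 0 := by rintro rfl; simp at hhw
  exact ⟨(‖h‖⁻¹ : ℝ) • h, Y.smul_mem _ hhY, norm_smul_inv_norm h0⟩

end IsNorming

/-- Both bounds come from `‖z + g z • u‖ ≤ ‖z‖ + g z` and `‖z + g z • u‖ ≤ ‖u + z‖ + (1 - g z)`. -/
lemma sub_lt_apply_and_norm_add_of_lt_norm_add_smul {u z : X} {g : StrongDual ℝ X}
    (hu : ‖u‖ = 1) (hg : ‖g‖ = 1) (hz : ‖z‖ ≤ 1) (hgz : 0 ≤ g z) {δ : ℝ}
    (h : 2 - δ < ‖z + g z • u‖) : 1 - δ < g z ∧ 2 - 2 * δ < ‖u + z‖ := by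
  have hgz1 : g z ≤ 1 := g.apply_le_one hg.le hz
  have hsmul : ∀ t : ℝ, 0 ≤ t → ‖t • u‖ = t := fun t ht => by
    rw [norm_smul, hu, mul_one, Real.norm_of_nonneg ht]
  have h₁ : ‖z + g z • u‖ ≤ ‖z‖ + g z := (norm_add_le _ _).trans_eq (by rw [hsmul _ hgz])
  have h₂ : ‖z + g z • u‖ ≤ ‖u + z‖ + (1 - g z) := by
    calc ‖z + g z • u‖ = ‖(u + z) - (1 - g z) • u‖ := by congr 1; rw [sub_smul, one_smul]; abel
      _ ≤ ‖u + z‖ + ‖(1 - g z) • u‖ := norm_sub_le _ _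
      _ = ‖u + z‖ + (1 - g z) := by rw [hsmul _ (by linarith)]
  constructor <;> linarith

variable {Y : Subspace ℝ (StrongDual ℝ X)}

lemma DaugavetWrt.exists_mem_ballSlice_lt_norm_add (hDW : DaugavetWrt X Y)
    {g : StrongDual ℝ X} (hgY : g ∈ Y) (hg : ‖g‖ = 1) {u : X} (hu : ‖u‖ = 1)
    {δ : ℝ} (hδ : 0 < δ) : ∃ z ∈ ballSlice g (1 - δ), 2 - δ < ‖u + z‖ := by
  have hT : ‖ContinuousLinearMap.id ℝ X + g.smulRight u‖ = 2 := by
    rw [hDW u g hgY, ContinuousLinearMap.norm_smulRight_apply, hg, hu]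
    norm_num
  obtain ⟨z, hz, hTz⟩ := (ContinuousLinearMap.id ℝ X + g.smulRight u).exists_lt_apply_of_lt_opNorm
    (show 2 - δ / 2 < _ by rw [hT]; linarith)
  simp only [add_apply, ContinuousLinearMap.id_apply,
    ContinuousLinearMap.smulRight_apply] at hTz
  wlog hgz : 0 ≤ g z generalizing z
  · refine this (-z) (by simpa using hz) ?_ (by simp; linarith)
    rwa [map_neg, neg_smul, ← neg_add, norm_neg]
  obtain ⟨hgz', hnorm⟩ := sub_lt_apply_and_norm_add_of_lt_norm_add_smul hu hg hz.le hgz hTz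
  exact ⟨z, ⟨hz.le, by linarith⟩, by linarith⟩

lemma exists_ballSlice_subset_lt_norm_add (hY : IsNorming X Y) (hDW : DaugavetWrt X Y)
    {g : StrongDual ℝ X} (hgY : g ∈ Y) (hg : ‖g‖ = 1) {c : ℝ} (hc : c < 1)
    {u : X} (hu : ‖u‖ = 1) {ε : ℝ} (hε : 0 < ε) :
    ∃ g' ∈ Y, ‖g'‖ = 1 ∧ ∃ c' < 1,
      ballSlice g' c' ⊆ ballSlice g c ∩ {z | 2 - ε < ‖u + z‖} := by
  obtain ⟨δ, hδ, hδc, hδε, hδ1⟩ : ∃ δ > 0, 4 * δ ≤ 1 - c ∧ 6 * δ ≤ ε ∧ 4 * δ < 2 :=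
    ⟨min (1 - c) (min ε 1) / 6, by positivity, by linarith [min_le_left (1 - c) (min ε 1)],
      by linarith [min_le_right (1 - c) (min ε 1), min_le_left ε 1],
      by linarith [min_le_right (1 - c) (min ε 1), min_le_right ε 1]⟩
  obtain ⟨z₀, ⟨hz₀, hgz₀⟩, huz₀⟩ := hDW.exists_mem_ballSlice_lt_norm_add hgY hg hu hδ
  obtain ⟨h, hhY, hh, hhuz₀⟩ := hY.exists_norm_sub_lt_apply (u + z₀) hδ
  rw [map_add] at hhuz₀
  have hhu := h.apply_le_one hh hu.le
  have hhz₀ := h.apply_le_one hh hz₀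
  -- where `g + h` is near `2`, both `g z` and `h z` are near `1`; and `h u` is near `1` too
  have hGz₀ : 2 - 4 * δ < (g + h) z₀ := by rw [add_apply]; linarith
  have hGz₀_le : (g + h) z₀ ≤ ‖g + h‖ := (g + h).apply_le_opNorm_of_norm_le_one hz₀
  have hG : 0 < ‖g + h‖ := by linarith
  refine ⟨‖g + h‖⁻¹ • (g + h), Y.smul_mem _ (Y.add_mem hgY hhY),
    norm_smul_inv_norm (norm_pos_iff.1 hG), ‖g + h‖⁻¹ * (2 - 4 * δ),
    by rw [inv_mul_lt_one₀ hG]; linarith, ?_⟩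
  rw [ballSlice_smul _ _ (inv_pos.2 hG)]
  rintro z ⟨hz, hGz⟩
  rw [add_apply] at hGz
  have hgz := g.apply_le_one hg.le hz
  have hhz := h.apply_le_one hh hz
  have huz := h.apply_le_norm_of_opNorm_le_one hh (u + z)
  rw [map_add] at huz
  exact ⟨⟨hz, by linarith⟩, show 2 - ε < ‖u + z‖ by linarith⟩

lemma exists_ballSlice_subset_forall_lt_norm_add (hY : IsNorming X Y) (hDW : DaugavetWrt X Y)
    {ε : ℝ} (hε : 0 < ε) {s : Set X} (hs : s.Finite) (hs1 : ∀ u ∈ s, ‖u‖ = 1)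
    {g : StrongDual ℝ X} (hgY : g ∈ Y) (hg : ‖g‖ = 1) {c : ℝ} (hc : c < 1) :
    ∃ g' ∈ Y, ‖g'‖ = 1 ∧ ∃ c' < 1,
      ballSlice g' c' ⊆ ballSlice g c ∩ {z | ∀ u ∈ s, 2 - ε < ‖u + z‖} := by
  induction s, hs using Set.Finite.induction_on generalizing g c with
  | empty => exact ⟨g, hgY, hg, c, hc, fun z hz => ⟨hz, by simp⟩⟩
  | @insert u s _ _ ih =>
    obtain ⟨g₁, hg₁Y, hg₁, c₁, hc₁, hsub₁⟩ :=
      exists_ballSlice_subset_lt_norm_add hY hDW hgY hg hc (hs1 u (Set.mem_insert _ _)) hε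
    obtain ⟨g', hg'Y, hg', c', hc', hsub'⟩ :=
      ih (fun v hv => hs1 v (Set.mem_insert_of_mem _ hv)) hg₁Y hg₁ hc₁
    refine ⟨g', hg'Y, hg', c', hc', fun z hz => ?_⟩
    obtain ⟨hz₁, hzs⟩ := hsub' hz
    obtain ⟨hz₀, hzu⟩ := hsub₁ hz₁
    exact ⟨hz₀, Set.forall_mem_insert.2 ⟨hzu, hzs⟩⟩

lemma AlmostDaugavet.exists_forall_lt_norm_add (hD : AlmostDaugavet X) {s : Set X}
    (hs : s.Finite) (hs1 : ∀ u ∈ s, ‖u‖ = 1) {ε : ℝ} (hε : 0 < ε) :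
    ∃ z : X, ‖z‖ ≤ 1 ∧ ∀ u ∈ s, 2 - ε < ‖u + z‖ := by
  obtain ⟨Y, hY, hDW⟩ := hD
  obtain rfl | ⟨u, hu⟩ := s.eq_empty_or_nonempty
  · exact ⟨0, by simp, by simp⟩
  have : Nontrivial X := ⟨⟨u, 0, norm_ne_zero_iff.1 ((hs1 u hu).trans_ne one_ne_zero)⟩⟩
  obtain ⟨g, hgY, hg⟩ := hY.exists_norm_eq_one
  obtain ⟨g', -, hg', c', hc', hsub⟩ :=
    exists_ballSlice_subset_forall_lt_norm_add hY hDW hε hs hs1 hgY hg one_pos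
  obtain ⟨z, hz⟩ := ballSlice_nonempty hg' hc'
  exact ⟨z, (hsub hz).1.1, (hsub hz).2⟩

lemma exists_dual_sub_lt_apply_of_lt_norm_add {x z : X} (hx : ‖x‖ ≤ 1) (hz : ‖z‖ ≤ 1)
    {δ : ℝ} (h : 2 - δ < ‖x + z‖) :
    ∃ f : StrongDual ℝ X, ‖f‖ ≤ 1 ∧ 1 - δ < f x ∧ 1 - δ < f z := by
  obtain ⟨f, hf, hfxz⟩ := exists_dual_vector'' ℝ (x + z)
  rw [map_add, RCLike.ofReal_real_eq_id, id] at hfxz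
  have := f.apply_le_one hf hx
  have := f.apply_le_one hf hz
  exact ⟨f, hf, by linarith, by linarith⟩

lemma ccomb_subset_closedBall {E : Type*} [SeminormedAddCommGroup E] [NormedSpace ℝ E] {n : ℕ}
    {lam : Fin n → ℝ} (hlam : ∀ i, 0 ≤ lam i) (hsum : ∑ i, lam i = 1) {S : Fin n → Set E}
    (hS : ∀ i, S i ⊆ closedBall 0 1) : ccomb lam S ⊆ closedBall 0 1 := by
  rintro _ ⟨f, hf, rfl⟩
  rw [mem_closedBall_zero_iff]
  calc ‖∑ i, lam i • f i‖ ≤ ∑ i, ‖lam i • f i‖ := norm_sum_le _ _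
    _ ≤ ∑ i, lam i := Finset.sum_le_sum fun i _ => by
        rw [norm_smul, Real.norm_of_nonneg (hlam i)]
        exact mul_le_of_le_one_right (hlam i) (mem_closedBall_zero_iff.1 (hS i (hf i)))
    _ = 1 := hsum

lemma wSlice_subset_closedBall (x : X) (α : ℝ) : wSlice x α ⊆ closedBall 0 1 :=
  fun _ hf => mem_closedBall_zero_iff.2 hf.1

lemma two_sub_le_diam_ccomb_wSlice {n : ℕ} {lam : Fin n → ℝ} (hlam : ∀ i, 0 ≤ lam i)
    (hsum : ∑ i, lam i = 1) {x : Fin n → X} (hx : ∀ i, ‖x i‖ ≤ 1) {α : Fin n → ℝ}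
    {z : X} (hz : ‖z‖ ≤ 1) {δ : ℝ} (hδα : ∀ i, δ ≤ α i)
    (hplus : ∀ i, 2 - δ < ‖x i + z‖) (hminus : ∀ i, 2 - δ < ‖x i - z‖) :
    2 - 2 * δ ≤ diam (ccomb lam fun i => wSlice (x i) (α i)) := by
  choose f hf hfx hfz using fun i => exists_dual_sub_lt_apply_of_lt_norm_add (hx i) hz (hplus i)
  choose k hk hkx hkz using fun i =>
    exists_dual_sub_lt_apply_of_lt_norm_add (hx i) (norm_neg z ▸ hz)
      (sub_eq_add_neg (x i) z ▸ hminus i)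
  have hmem : ∀ φ : Fin n → StrongDual ℝ X, (∀ i, ‖φ i‖ ≤ 1) → (∀ i, 1 - δ < φ i (x i)) →
      ∑ i, lam i • φ i ∈ ccomb lam fun i => wSlice (x i) (α i) :=
    fun φ hφ hφx => ⟨φ, fun i => ⟨hφ i, by linarith [hφx i, hδα i]⟩, rfl⟩
  have hbdd := (isBounded_closedBall (x := (0 : StrongDual ℝ X)) (r := 1)).subset
    (ccomb_subset_closedBall hlam hsum fun i => wSlice_subset_closedBall (x i) (α i))
  calc 2 - 2 * δ = ∑ i, lam i * (2 - 2 * δ) := by rw [← Finset.sum_mul, hsum, one_mul]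
    _ ≤ ∑ i, lam i * (f i z - k i z) := Finset.sum_le_sum fun i _ =>
        mul_le_mul_of_nonneg_left (by linarith [hfz i, hkz i, map_neg (k i) z]) (hlam i)
    _ = (∑ i, lam i • f i - ∑ i, lam i • k i) z := by
        simp [Finset.sum_sub_distrib, mul_sub]
    _ ≤ ‖∑ i, lam i • f i - ∑ i, lam i • k i‖ := StrongDual.apply_le_opNorm_of_norm_le_one _ hz
    _ = dist (∑ i, lam i • f i) (∑ i, lam i • k i) := (dist_eq_norm _ _).symm
    _ ≤ _ := dist_le_diam_of_mem hbdd (hmem f hf hfx) (hmem k hk hkx)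

end

theorem almostDaugavet_implies_ccomb_wSlices_diam_two_general
    (X : Type*) [NormedAddCommGroup X] [NormedSpace ℝ X]
    (hD : AlmostDaugavet X)
    (n : ℕ) (lam : Fin n → ℝ) (hlam : ∀ i, 0 < lam i) (hsum : ∑ i, lam i = 1)
    (x : Fin n → X) (hx : ∀ i, ‖x i‖ = 1)
    (α : Fin n → ℝ) (hα : ∀ i, α i ∈ Set.Ioo (0 : ℝ) 1) :
    Metric.diam (ccomb lam (fun i => wSlice (x i) (α i))) = 2 := by
  have hlam' : ∀ i, 0 ≤ lam i := fun i => (hlam i).le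
  refine le_antisymm ?_ (le_of_forall_pos_le_add fun ε hε => ?_)
  · refine (diam_mono (ccomb_subset_closedBall hlam' hsum fun i => wSlice_subset_closedBall _ _)
      isBounded_closedBall).trans ?_
    simpa using diam_closedBall (x := (0 : StrongDual ℝ X)) zero_le_one
  obtain ⟨δ, hδα, hδε⟩ := ((eventually_all.2 fun i => Ioo_mem_nhdsGT (hα i).1).and
    (Ioo_mem_nhdsGT (half_pos hε))).exists
  have hs : (Set.range x ∪ Set.range (-x)).Finite := (Set.finite_range _).union (Set.finite_range _)
  obtain ⟨z, hz, hzs⟩ := hD.exists_forall_lt_norm_add hs (by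
    rintro _ (⟨i, rfl⟩ | ⟨i, rfl⟩) <;> simp [hx i]) hδε.1
  have := two_sub_le_diam_ccomb_wSlice hlam' hsum (fun i => (hx i).le) hz (fun i => (hδα i).2.le)
    (fun i => hzs _ (Or.inl ⟨i, rfl⟩))
    (fun i => by simpa [neg_add_eq_sub, norm_sub_rev] using hzs _ (Or.inr ⟨i, rfl⟩))
  linarith [hδε.2]

theorem almostDaugavet_implies_ccomb_wSlices_diam_two
    (X : Type*) [NormedAddCommGroup X] [NormedSpace ℝ X] [CompleteSpace X]
    (hD : AlmostDaugavet X)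
    (n : ℕ) (lam : Fin n → ℝ) (hlam : ∀ i, 0 < lam i) (hsum : ∑ i, lam i = 1)
    (x : Fin n → X) (hx : ∀ i, ‖x i‖ = 1)
    (α : Fin n → ℝ) (hα : ∀ i, α i ∈ Set.Ioo (0 : ℝ) 1) :
    Metric.diam (ccomb lam (fun i => wSlice (x i) (α i))) = 2 :=
  almostDaugavet_implies_ccomb_wSlices_diam_two_general X hD n lam hlam hsum x hx α hα
end
end

section
/- Let (X, ‖·‖) be a Banach space and C ⊆ B_X an absolutely convex closed subset such that every convex combination of slices of C has ‖·‖-diameter 2. Then for every ε > 0 there is an equivalent norm |·| on X (whose unit ball is the closure of C + η B_X for suitable η > 0) such that every convex combination of slices of B_{(X,|·|)} has |·|-diameter at least 2 − ε. -/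
/-!
Take `η = ε / 4` and `B = closure (C + η • B_X)`. As `0 ∈ C` by symmetry and convexity,
`η • B_X ⊆ B ⊆ (1 + η) • B_X`, whence `‖x‖ / (1 + η) ≤ gauge B x`. Since `sup_B φ ≤ sup_C φ + η ‖φ‖`, the slice `S(B, φ, β)` contains
`S(C, φ, β / 2) + z` for every `z ∈ η • B_X` with `φ z > η ‖φ‖ - β / 2`. Translating a convex
combination of `C`-slices by the single vector `∑ λᵢ zᵢ` therefore lands in the corresponding
combination of `B`-slices without changing differences, so two points at norm distance
`> 2 - ε / 2` in the former give gauge distance `> (2 - ε / 2) / (1 + ε / 4) ≥ 2 - ε` in the latter.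
-/

open scoped BigOperators Pointwise
open Metric

noncomputable section

/-- The slice of a bounded set `A ⊆ X` cut by the functional `φ` at depth `β`
below its supremum on `A` (i.e. the slice `S(A, φ, β)` for `φ` of norm one
with respect to the norm whose unit ball is `A`). -/
def supSlice {X : Type*} [NormedAddCommGroup X] [NormedSpace ℝ X]
    (A : Set X) (φ : StrongDual ℝ X) (β : ℝ) : Set X :=
  {x ∈ A | sSup ((fun y => φ y) '' A) - β < φ x}

open Bornology

section ConvexCombination

variable {E : Type*} [AddCommGroup E] [Module ℝ E] {n : ℕ} {lam : Fin n → ℝ}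

lemma ccomb_subset_of_convex {A : Set E} {S : Fin n → Set E} (hA : Convex ℝ A)
    (hlam : ∀ i, 0 ≤ lam i) (hsum : ∑ i, lam i = 1) (hS : ∀ i, S i ⊆ A) :
    ccomb lam S ⊆ A := by
  rintro _ ⟨f, hf, rfl⟩
  exact hA.sum_mem (fun i _ => hlam i) hsum fun i _ => hS i (hf i)

lemma add_sum_smul_mem_ccomb {S T : Fin n → Set E} {z : Fin n → E}
    (hST : ∀ i, ∀ x ∈ S i, x + z i ∈ T i) {u : E} (hu : u ∈ ccomb lam S) :
    u + ∑ i, lam i • z i ∈ ccomb lam T := by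
  obtain ⟨f, hf, rfl⟩ := hu
  exact ⟨fun i => f i + z i, fun i => hST i _ (hf i),
    by simp only [smul_add, Finset.sum_add_distrib]⟩

end ConvexCombination

lemma Convex.zero_mem_of_neg_eq {E : Type*} [AddCommGroup E] [Module ℝ E] {C : Set E}
    (hC : Convex ℝ C) (hsym : C = -C) (hne : C.Nonempty) : (0 : E) ∈ C := by
  obtain ⟨x, hx⟩ := hne
  have hnx : -x ∈ C := by rw [hsym]; simpa using hx
  simpa using hC hx hnx (a := 1 / 2) (b := 1 / 2) (by norm_num) (by norm_num) (by norm_num)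

lemma Metric.exists_lt_dist_of_lt_diam {α : Type*} [PseudoMetricSpace α] {s : Set α} {d : ℝ}
    (hs : s.Nonempty) (h : d < diam s) : ∃ x ∈ s, ∃ y ∈ s, d < dist x y := by
  by_contra! H
  exact h.not_ge (diam_le_of_forall_dist_le_of_nonempty hs H)

section SeminormedAddCommGroup

variable {E : Type*} [SeminormedAddCommGroup E]

lemma closedBall_subset_closure_add_closedBall {A : Set E} (h0 : (0 : E) ∈ A) (r : ℝ) :
    closedBall (0 : E) r ⊆ closure (A + closedBall 0 r) :=
  fun k hk => subset_closure (by simpa using Set.add_mem_add h0 hk)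

lemma closure_add_closedBall_subset_closedBall {A : Set E} {R r : ℝ}
    (hA : A ⊆ closedBall 0 R) : closure (A + closedBall 0 r) ⊆ closedBall (0 : E) (R + r) := by
  refine closure_minimal ?_ isClosed_closedBall
  rintro _ ⟨a, ha, k, hk, rfl⟩
  rw [mem_closedBall_zero_iff] at hk ⊢
  exact (norm_add_le a k).trans (add_le_add (mem_closedBall_zero_iff.1 (hA ha)) hk)

end SeminormedAddCommGroup

section Normed

variable {X : Type*} [NormedAddCommGroup X] [NormedSpace ℝ X]

lemma exists_mem_closedBall_lt_apply (φ : StrongDual ℝ X) {r δ : ℝ} (hr : 0 < r) (hδ : 0 < δ) :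
    ∃ z ∈ closedBall (0 : X) r, r * ‖φ‖ - δ < φ z := by
  obtain ⟨e, he, hφe⟩ := φ.exists_lt_apply_of_lt_opNorm (sub_lt_self ‖φ‖ (div_pos hδ hr))
  obtain ⟨e', he', hφe'⟩ : ∃ e' : X, ‖e'‖ ≤ 1 ∧ ‖φ‖ - δ / r < φ e' := by
    rcases lt_abs.1 (Real.norm_eq_abs (φ e) ▸ hφe) with h | h
    · exact ⟨e, he.le, h⟩
    · exact ⟨-e, by simpa using he.le, by simpa using h⟩
  refine ⟨r • e', ?_, ?_⟩
  · rw [mem_closedBall_zero_iff, norm_smul, Real.norm_of_nonneg hr.le]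
    exact mul_le_of_le_one_right hr.le he'
  · rw [map_smul, smul_eq_mul]
    calc r * ‖φ‖ - δ = r * (‖φ‖ - δ / r) := by field_simp
      _ < r * φ e' := by gcongr

lemma sSup_image_closure_add_closedBall_le {A : Set X} (φ : StrongDual ℝ X) {r : ℝ}
    (hr : 0 ≤ r) (hA : A.Nonempty) (hφA : BddAbove ((fun y => φ y) '' A)) :
    sSup ((fun y => φ y) '' closure (A + closedBall 0 r)) ≤
      sSup ((fun y => φ y) '' A) + r * ‖φ‖ := by
  have hsub : A + closedBall 0 r ⊆ {w | φ w ≤ sSup ((fun y => φ y) '' A) + r * ‖φ‖} := by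
    rintro _ ⟨a, ha, k, hk, rfl⟩
    have hφa : φ a ≤ sSup ((fun y => φ y) '' A) := le_csSup hφA (Set.mem_image_of_mem _ ha)
    have hφk : φ k ≤ ‖φ‖ * r :=
      (Real.le_norm_self _).trans (φ.le_opNorm_of_le (mem_closedBall_zero_iff.1 hk))
    show φ (a + k) ≤ _
    rw [map_add]
    linarith
  refine csSup_le ((hA.add (nonempty_closedBall.2 hr)).closure.image _) ?_
  rintro _ ⟨b, hb, rfl⟩
  exact closure_minimal hsub (isClosed_le φ.continuous continuous_const) hb

lemma add_mem_supSlice_closure_add_closedBall {A : Set X} {φ : StrongDual ℝ X}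
    {r δ₁ δ₂ : ℝ} {x z : X} (hφA : BddAbove ((fun y => φ y) '' A))
    (hx : x ∈ supSlice A φ δ₁) (hz : z ∈ closedBall (0 : X) r) (hφz : r * ‖φ‖ - δ₂ < φ z) :
    x + z ∈ supSlice (closure (A + closedBall 0 r)) φ (δ₁ + δ₂) := by
  refine ⟨subset_closure (Set.add_mem_add hx.1 hz), ?_⟩
  have hsup := sSup_image_closure_add_closedBall_le φ (nonempty_closedBall.1 ⟨z, hz⟩)
    ⟨x, hx.1⟩ hφA
  have hφx := hx.2
  rw [map_add]
  linarith

lemma bddAbove_image2_gauge_sub {B S : Set X} {r : ℝ} (hr : 0 < r) (hB : ball (0 : X) r ⊆ B)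
    (hS : IsBounded S) : BddAbove (Set.image2 (fun u v => gauge B (u - v)) S S) := by
  obtain ⟨R, hR⟩ := hS.exists_norm_le
  refine ⟨2 * R / r, ?_⟩
  rintro _ ⟨u, hu, v, hv, rfl⟩
  rw [le_div_iff₀ hr, mul_comm]
  calc r * gauge B (u - v) ≤ ‖u - v‖ := mul_gauge_le_norm hB
    _ ≤ ‖u‖ + ‖v‖ := norm_sub_le u v
    _ ≤ 2 * R := by linarith [hR u hu, hR v hv]

lemma norm_sub_div_le_sSup_image2_gauge_sub {B S : Set X} {r R : ℝ} (hr : 0 < r)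
    (hrB : ball (0 : X) r ⊆ B) (hBR : B ⊆ closedBall 0 R) (hSB : S ⊆ B) {u v : X}
    (hu : u ∈ S) (hv : v ∈ S) :
    ‖u - v‖ / R ≤ sSup (Set.image2 (fun u v => gauge B (u - v)) S S) := by
  have hR : 0 ≤ R := by
    simpa using hBR (hrB (mem_ball_self hr))
  calc ‖u - v‖ / R ≤ gauge B (u - v) :=
        le_gauge_of_subset_closedBall ((absorbent_ball_zero hr).mono hrB) hR hBR
    _ ≤ _ := le_csSup (bddAbove_image2_gauge_sub hr hrB
        ((isBounded_closedBall.subset hBR).subset hSB)) (Set.mem_image2_of_mem hu hv)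

end Normed

theorem renorming_from_abs_convex_set_with_diam_two_ccombs_general
    (X : Type*) [NormedAddCommGroup X] [NormedSpace ℝ X]
    (C : Set X) (hCball : C ⊆ closedBall 0 1)
    (hCconv : Convex ℝ C) (hCsym : C = -C)
    (hC : ∀ (n : ℕ) (lam : Fin n → ℝ), (∀ i, 0 < lam i) → ∑ i, lam i = 1 →
      ∀ (φ : Fin n → StrongDual ℝ X) (β : Fin n → ℝ), (∀ i, 0 < β i) →
      Metric.diam (ccomb lam (fun i => supSlice C (φ i) (β i))) = 2)
    (ε : ℝ) (hε : 0 < ε) :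
    ∃ η > (0:ℝ), ∃ B : Set X,
      -- `B` is the unit ball of the equivalent norm `|·| = gauge B`
      B = closure (C + η • closedBall (0:X) 1) ∧
      ∀ (n : ℕ) (lam : Fin n → ℝ), (∀ i, 0 < lam i) → ∑ i, lam i = 1 →
      ∀ (φ : Fin n → StrongDual ℝ X) (β : Fin n → ℝ), (∀ i, 0 < β i) →
      2 - ε ≤ sSup (Set.image2 (fun u v => gauge B (u - v))
        (ccomb lam (fun i => supSlice B (φ i) (β i)))
        (ccomb lam (fun i => supSlice B (φ i) (β i)))) := by
  set η := ε / 4 with hη_def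
  have hη : 0 < η := by positivity
  refine ⟨η, hη, _, rfl, fun n lam hlam hsum φ β hβ => ?_⟩
  rw [smul_unitClosedBall_of_nonneg hη.le]
  set B := closure (C + closedBall (0 : X) η)
  set SC := ccomb lam fun i => supSlice C (φ i) (β i / 2)
  have hdiam : diam SC = 2 := hC n lam hlam hsum φ _ fun i => half_pos (hβ i)
  have hSC : SC.Nonempty := Set.nonempty_iff_ne_empty.2 fun h => by norm_num [h] at hdiam
  obtain ⟨u, hu, v, hv, huv⟩ := exists_lt_dist_of_lt_diam hSC (d := 2 - ε / 2) (by linarith)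
  have h0C : (0 : X) ∈ C := hCconv.zero_mem_of_neg_eq hCsym ⟨u,
    ccomb_subset_of_convex hCconv (fun i => (hlam i).le) hsum (fun _ => Set.sep_subset _ _) hu⟩
  have hφC i : BddAbove ((fun y => φ i y) '' C) :=
    ((φ i).lipschitz.isBounded_image (isBounded_closedBall.subset hCball)).bddAbove
  choose z hz hφz using fun i => exists_mem_closedBall_lt_apply (φ i) hη (half_pos (hβ i))
  have hshift : ∀ w ∈ SC, w + ∑ i, lam i • z i ∈ ccomb lam fun i => supSlice B (φ i) (β i) :=
    fun w => add_sum_smul_mem_ccomb fun i x hx => by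
      simpa only [add_halves] using
        add_mem_supSlice_closure_add_closedBall (hφC i) hx (hz i) (hφz i)
  calc 2 - ε ≤ (2 - ε / 2) / (1 + η) := by rw [le_div_iff₀ (by positivity)]; nlinarith
    _ ≤ ‖u - v‖ / (1 + η) := by gcongr; rw [← dist_eq_norm]; exact huv.le
    _ = ‖(u + ∑ i, lam i • z i) - (v + ∑ i, lam i • z i)‖ / (1 + η) := by
        rw [add_sub_add_right_eq_sub]
    _ ≤ _ := norm_sub_div_le_sSup_image2_gauge_sub hη
        (ball_subset_closedBall.trans (closedBall_subset_closure_add_closedBall h0C η))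
        (closure_add_closedBall_subset_closedBall hCball)
        (ccomb_subset_of_convex (hCconv.add (convex_closedBall 0 η)).closure
          (fun i => (hlam i).le) hsum fun _ => Set.sep_subset _ _)
        (hshift u hu) (hshift v hv)

theorem renorming_from_abs_convex_set_with_diam_two_ccombs
    (X : Type*) [NormedAddCommGroup X] [NormedSpace ℝ X] [CompleteSpace X]
    (C : Set X) (hCball : C ⊆ closedBall 0 1) (hCclosed : IsClosed C)
    (hCconv : Convex ℝ C) (hCsym : C = -C)
    (hC : ∀ (n : ℕ) (lam : Fin n → ℝ), (∀ i, 0 < lam i) → ∑ i, lam i = 1 →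
      ∀ (φ : Fin n → StrongDual ℝ X) (β : Fin n → ℝ), (∀ i, 0 < β i) →
      Metric.diam (ccomb lam (fun i => supSlice C (φ i) (β i))) = 2)
    (ε : ℝ) (hε : 0 < ε) :
    ∃ η > (0:ℝ), ∃ B : Set X,
      -- `B` is the unit ball of the equivalent norm `|·| = gauge B`
      B = closure (C + η • closedBall (0:X) 1) ∧
      ∀ (n : ℕ) (lam : Fin n → ℝ), (∀ i, 0 < lam i) → ∑ i, lam i = 1 →
      ∀ (φ : Fin n → StrongDual ℝ X) (β : Fin n → ℝ), (∀ i, 0 < β i) →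
      2 - ε ≤ sSup (Set.image2 (fun u v => gauge B (u - v))
        (ccomb lam (fun i => supSlice B (φ i) (β i)))
        (ccomb lam (fun i => supSlice B (φ i) (β i)))) :=
  renorming_from_abs_convex_set_with_diam_two_ccombs_general X C hCball hCconv hCsym hC ε hε
end
end
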